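/- Let 0 < δ < D(Q‖P), α* ∈ (0,1) with D(Q_{α*}‖P) = δ, and suppose σ₀² := inf_{α∈(0,1)} Var(log(dP/dQ)(X^{(α)})) > 0 and ρ₀ := sup_{α∈(0,1)} 𝔼|log(dP/dQ)(X^{(α)}) − 𝔼 log(dP/dQ)(X^{(α)})|³ < ∞. Then for α ∈ (α*, 1), the second-order Taylor bound D(Q_α‖P) ≤ D(Q_{α*}‖P) − (α−α*)(1−α*)σ*² + (1/2)(α−α*)²(σ*² + 2ρ₀) holds, where σ*² = Var(log(dP/dQ)(X^{(α*)})). -/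

import Mathlib

open MeasureTheory Real Set

noncomputable def Zfun {A : Type*} [MeasurableSpace A] (μ : Measure A) (p q : A → ℝ) (a : ℝ) : ℝ :=
  ∫ x, p x ^ a * q x ^ (1-a) ∂μ

/-- Density of the tilted measure `Q_α`. -/
noncomputable def qdens {A : Type*} [MeasurableSpace A] (μ : Measure A) (p q : A → ℝ) (a : ℝ) (x : A) : ℝ :=
  p x ^ a * q x ^ (1-a) / Zfun μ p q a

/-- `D(Q_α ‖ P)`. -/
noncomputable def DtiltP {A : Type*} [MeasurableSpace A] (μ : Measure A) (p q : A → ℝ) (a : ℝ) : ℝ :=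
  ∫ x, qdens μ p q a x * Real.log (qdens μ p q a x / p x) ∂μ

/-- `D(Q_α ‖ Q)`. -/
noncomputable def DtiltQ {A : Type*} [MeasurableSpace A] (μ : Measure A) (p q : A → ℝ) (a : ℝ) : ℝ :=
  ∫ x, qdens μ p q a x * Real.log (qdens μ p q a x / q x) ∂μ

/-- Mean of the log-likelihood ratio `log(p/q)` under `Q_α`. -/
noncomputable def tiltMean {A : Type*} [MeasurableSpace A] (μ : Measure A) (p q : A → ℝ) (a : ℝ) : ℝ :=
  ∫ x, qdens μ p q a x * Real.log (p x / q x) ∂μ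

/-- Variance of `log(p/q)` under `Q_α`. -/
noncomputable def tiltVar {A : Type*} [MeasurableSpace A] (μ : Measure A) (p q : A → ℝ) (a : ℝ) : ℝ :=
  (∫ x, qdens μ p q a x * (Real.log (p x / q x))^2 ∂μ) - (tiltMean μ p q a)^2

/-- Third central moment of `log(p/q)` under `Q_α`. -/
noncomputable def tiltM3 {A : Type*} [MeasurableSpace A] (μ : Measure A) (p q : A → ℝ) (a : ℝ) : ℝ :=
  ∫ x, qdens μ p q a x * (Real.log (p x / q x) - tiltMean μ p q a)^3 ∂μ

/-- Absolute third central moment of `log(p/q)` under `Q_α`. -/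
noncomputable def tiltM3abs {A : Type*} [MeasurableSpace A] (μ : Measure A) (p q : A → ℝ) (a : ℝ) : ℝ :=
  ∫ x, qdens μ p q a x * |Real.log (p x / q x) - tiltMean μ p q a|^3 ∂μ


/-! Write `M k a = ∫ p^a q^(1-a) (log (p/q))^k`, so that `Zfun = M 0`. The envelope
`(p + q)(1 + |log (p/q)|³)` dominates every integrand with `k ≤ 3`, so `M k' = M (k+1)` for
`k ≤ 2`. Since `D(Q_a‖P) = -(1-a)·mean_a - log Z(a)` and `mean_a = M 1 / M 0`, this gives
`D' = -(1-a)·Var_a`, `Var' = M3_a` (third central moment) and `D'' = Var_a - (1-a)·M3_a`.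
A positive lower bound on the variance forces `Z > 0`, because `Z(a) = 0` makes the tilted
density vanish. With `|M3_a| ≤ ρ₀`, the variance grows by at most `ρ₀ (a - α*)` from `σ*²`,
so `D'' ≤ σ*² + 2ρ₀` on `[α*, α]`, and the second-order Taylor bound follows. -/

open Filter Topology

theorem abs_pow_le_one_add_abs_pow_three {k : ℕ} (hk : k ≤ 3) (y : ℝ) : |y| ^ k ≤ 1 + |y| ^ 3 := by
  rcases le_total |y| 1 with hy | hy
  · linarith [pow_le_one₀ (abs_nonneg y) hy (n := k), pow_nonneg (abs_nonneg y) 3]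
  · linarith [pow_le_pow_right₀ hy hk]

theorem rpow_mul_rpow_one_sub_le_add {u v a : ℝ} (hu : 0 ≤ u) (hv : 0 ≤ v)
    (ha : a ∈ Icc (0 : ℝ) 1) : u ^ a * v ^ (1 - a) ≤ u + v := by
  have h := geom_mean_le_arith_mean2_weighted ha.1 (sub_nonneg.2 ha.2) hu hv (by ring)
  nlinarith [ha.1, ha.2]

theorem abs_rpow_mul_rpow_one_sub_mul_pow_le {u v a y : ℝ} {k : ℕ} (hu : 0 ≤ u) (hv : 0 ≤ v)
    (ha : a ∈ Icc (0 : ℝ) 1) (hk : k ≤ 3) :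
    |u ^ a * v ^ (1 - a) * y ^ k| ≤ (u + v) * (1 + |y| ^ 3) := by
  rw [abs_mul, abs_pow, abs_of_nonneg (by positivity)]
  exact mul_le_mul (rpow_mul_rpow_one_sub_le_add hu hv ha) (abs_pow_le_one_add_abs_pow_three hk y)
    (by positivity) (by positivity)

theorem hasDerivAt_rpow_mul_rpow_one_sub {u v a : ℝ} (hu : 0 ≤ u) (hv : 0 ≤ v)
    (ha : a ∈ Ioo (0 : ℝ) 1) :
    HasDerivAt (fun t => u ^ t * v ^ (1 - t)) (u ^ a * v ^ (1 - a) * log (u / v)) a := by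
  by_cases huv : 0 < u ∧ 0 < v
  · obtain ⟨hu, hv⟩ := huv
    have hu' := (hasStrictDerivAt_const_rpow hu a).hasDerivAt
    have hv' := ((hasDerivAt_id a).const_sub 1).const_rpow hv
    refine (hu'.mul hv').congr_deriv ?_
    rw [log_div hu.ne' hv.ne', id_eq]
    ring
  · have hzero : ∀ t ∈ Ioo (0 : ℝ) 1, u ^ t * v ^ (1 - t) = 0 := by
      intro t ht
      rcases not_and_or.1 huv with hu' | hv'
      · rw [(not_lt.1 hu').antisymm hu, zero_rpow ht.1.ne', zero_mul]
      · rw [(not_lt.1 hv').antisymm hv, zero_rpow (sub_pos.2 ht.2).ne', mul_zero]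
    rw [hzero a ha, zero_mul]
    exact (hasDerivAt_const a 0).congr_of_eventuallyEq
      (eventually_of_mem (Ioo_mem_nhds ha.1 ha.2) hzero)

theorem rpow_mul_rpow_one_sub_div_mul_log_div {u v a : ℝ} (hu : 0 ≤ u) (hv : 0 ≤ v)
    (ha : a ∈ Ioo (0 : ℝ) 1) (Z : ℝ) :
    u ^ a * v ^ (1 - a) / Z * log (u ^ a * v ^ (1 - a) / Z / u)
      = u ^ a * v ^ (1 - a) / Z * (-(1 - a) * log (u / v) - log Z) := by
  by_cases h : 0 < u ∧ 0 < v ∧ Z ≠ 0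
  · obtain ⟨hu, hv, hZ⟩ := h
    have hua := (rpow_pos_of_pos hu a).ne'
    have hvb := (rpow_pos_of_pos hv (1 - a)).ne'
    rw [log_div (div_ne_zero (mul_ne_zero hua hvb) hZ) hu.ne', log_div (mul_ne_zero hua hvb) hZ,
      log_mul hua hvb, log_rpow hu, log_rpow hv, log_div hu.ne' hv.ne']
    ring
  · have hzero : u ^ a * v ^ (1 - a) / Z = 0 := by
      rcases not_and_or.1 h with hu' | h
      · rw [(not_lt.1 hu').antisymm hu, zero_rpow ha.1.ne', zero_mul, zero_div]
      rcases not_and_or.1 h with hv' | hZ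
      · rw [(not_lt.1 hv').antisymm hv, zero_rpow (sub_pos.2 ha.2).ne', mul_zero, zero_div]
      · rw [not_not.1 hZ, div_zero]
    rw [hzero, zero_mul, zero_mul]

theorem sub_le_mul_sub_of_hasDerivAt_le {f f' : ℝ → ℝ} {a b C : ℝ} (hab : a ≤ b)
    (hf : ∀ x ∈ Icc a b, HasDerivAt f (f' x) x) (hC : ∀ x ∈ Icc a b, f' x ≤ C) :
    f b - f a ≤ C * (b - a) := by
  refine (convex_Icc a b).image_sub_le_mul_sub_of_deriv_le
    (fun x hx => (hf x hx).continuousAt.continuousWithinAt)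
    (fun x hx => (hf x (interior_subset hx)).differentiableAt.differentiableWithinAt)
    (fun x hx => ?_) a (left_mem_Icc.2 hab) b (right_mem_Icc.2 hab) hab
  rw [(hf x (interior_subset hx)).deriv]
  exact hC x (interior_subset hx)

theorem image_le_taylor_of_hasDerivAt_le {f f' f'' : ℝ → ℝ} {a b C : ℝ} (hab : a ≤ b)
    (hf : ∀ x ∈ Icc a b, HasDerivAt f (f' x) x) (hf' : ∀ x ∈ Icc a b, HasDerivAt f' (f'' x) x)
    (hC : ∀ x ∈ Icc a b, f'' x ≤ C) :
    f b ≤ f a + f' a * (b - a) + C / 2 * (b - a) ^ 2 := by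
  have hg : ∀ x ∈ Icc a b, HasDerivAt (fun t => f t - f' a * (t - a) - C / 2 * (t - a) ^ 2)
      (f' x - f' a - C * (x - a)) x := by
    intro x hx
    refine (((hf x hx).sub (((hasDerivAt_id x).sub_const a).const_mul (f' a))).sub
      ((((hasDerivAt_id x).sub_const a).pow 2).const_mul (C / 2))).congr_deriv ?_
    simp only [id_eq]
    ring
  have hg' : ∀ x ∈ Icc a b, f' x - f' a - C * (x - a) ≤ 0 := fun x hx =>
    sub_nonpos.2 <| sub_le_mul_sub_of_hasDerivAt_le hx.1 (fun t ht => hf' t ⟨ht.1, ht.2.trans hx.2⟩)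
      (fun t ht => hC t ⟨ht.1, ht.2.trans hx.2⟩)
  have := sub_le_mul_sub_of_hasDerivAt_le hab hg hg'
  simp only [sub_self, mul_zero, zero_mul] at this
  linarith

section TiltedFamily

variable {A : Type*} [MeasurableSpace A] {μ : Measure A} {p q : A → ℝ}

noncomputable def tiltMoment (μ : Measure A) (p q : A → ℝ) (k : ℕ) (a : ℝ) : ℝ :=
  ∫ x, p x ^ a * q x ^ (1 - a) * log (p x / q x) ^ k ∂μ

theorem tiltMoment_zero : tiltMoment μ p q 0 = Zfun μ p q := by
  funext a
  simp [tiltMoment, Zfun]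

theorem tiltMean_eq_div : tiltMean μ p q = fun a => tiltMoment μ p q 1 a / Zfun μ p q a := by
  funext a
  simp only [tiltMean, qdens, tiltMoment, pow_one, ← integral_div]
  congr 1 with x
  ring

theorem tiltVar_eq_div :
    tiltVar μ p q = fun a => tiltMoment μ p q 2 a / Zfun μ p q a - tiltMean μ p q a ^ 2 := by
  funext a
  simp only [tiltVar, qdens, tiltMoment, ← integral_div]
  congr 2 with x
  ring

theorem tiltVar_eq_zero_of_Zfun_eq_zero {a : ℝ} (h : Zfun μ p q a = 0) : tiltVar μ p q a = 0 := by
  simp [tiltVar, tiltMean, qdens, h]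

theorem qdens_nonneg (hp0 : ∀ x, 0 ≤ p x) (hq0 : ∀ x, 0 ≤ q x) (a : ℝ) (x : A) :
    0 ≤ qdens μ p q a x :=
  div_nonneg (mul_nonneg (rpow_nonneg (hp0 x) a) (rpow_nonneg (hq0 x) _))
    (integral_nonneg fun y => mul_nonneg (rpow_nonneg (hp0 y) a) (rpow_nonneg (hq0 y) _))

theorem abs_tiltM3_le_tiltM3abs (hp0 : ∀ x, 0 ≤ p x) (hq0 : ∀ x, 0 ≤ q x) (a : ℝ) :
    |tiltM3 μ p q a| ≤ tiltM3abs μ p q a := by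
  refine (abs_integral_le_integral_abs).trans_eq (integral_congr_ae (Eventually.of_forall ?_))
  intro x
  simp only [abs_mul, abs_pow, abs_of_nonneg (qdens_nonneg hp0 hq0 a x)]

theorem integrable_envelope (hpi : Integrable p μ) (hqi : Integrable q μ)
    (hP3 : Integrable (fun x => p x * |log (p x / q x)| ^ 3) μ)
    (hQ3 : Integrable (fun x => q x * |log (p x / q x)| ^ 3) μ) :
    Integrable (fun x => (p x + q x) * (1 + |log (p x / q x)| ^ 3)) μ := by
  refine ((hpi.add hqi).add (hP3.add hQ3)).congr (Eventually.of_forall fun x => ?_)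
  simp only [Pi.add_apply]
  ring

variable (hp : Measurable p) (hq : Measurable q) (hp0 : ∀ x, 0 ≤ p x) (hq0 : ∀ x, 0 ≤ q x)
  (hdom : Integrable (fun x => (p x + q x) * (1 + |log (p x / q x)| ^ 3)) μ)
include hp hq hp0 hq0 hdom

theorem integrable_tiltMoment_integrand {k : ℕ} (hk : k ≤ 3) {a : ℝ} (ha : a ∈ Icc (0 : ℝ) 1) :
    Integrable (fun x => p x ^ a * q x ^ (1 - a) * log (p x / q x) ^ k) μ :=
  hdom.mono' (by fun_prop) (Eventually.of_forall fun x =>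
    abs_rpow_mul_rpow_one_sub_mul_pow_le (hp0 x) (hq0 x) ha hk)

theorem hasDerivAt_tiltMoment {k : ℕ} (hk : k ≤ 2) {a : ℝ} (ha : a ∈ Ioo (0 : ℝ) 1) :
    HasDerivAt (tiltMoment μ p q k) (tiltMoment μ p q (k + 1) a) a :=
  (hasDerivAt_integral_of_dominated_loc_of_deriv_le
    (F := fun t x => p x ^ t * q x ^ (1 - t) * log (p x / q x) ^ k)
    (F' := fun t x => p x ^ t * q x ^ (1 - t) * log (p x / q x) ^ (k + 1))
    (Ioo_mem_nhds ha.1 ha.2)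
    (Eventually.of_forall fun t => by fun_prop)
    (integrable_tiltMoment_integrand hp hq hp0 hq0 hdom (by omega) (Ioo_subset_Icc_self ha))
    (by fun_prop)
    (Eventually.of_forall fun x t ht =>
      abs_rpow_mul_rpow_one_sub_mul_pow_le (hp0 x) (hq0 x) (Ioo_subset_Icc_self ht) (by omega))
    hdom
    (Eventually.of_forall fun x t ht => by
      refine ((hasDerivAt_rpow_mul_rpow_one_sub (hp0 x) (hq0 x) ht).mul_const
        (log (p x / q x) ^ k)).congr_deriv ?_
      ring)).2

theorem DtiltP_eq {a : ℝ} (ha : a ∈ Ioo (0 : ℝ) 1) :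
    DtiltP μ p q a = -(1 - a) * tiltMean μ p q a - log (Zfun μ p q a) := by
  set Z := Zfun μ p q a
  have hw : Integrable (fun x => p x ^ a * q x ^ (1 - a) / Z) μ := by
    simpa using (integrable_tiltMoment_integrand hp hq hp0 hq0 hdom (k := 0) (by norm_num)
      (Ioo_subset_Icc_self ha)).div_const Z
  have hwL : Integrable (fun x => qdens μ p q a x * log (p x / q x)) μ := by
    simpa [qdens, div_mul_eq_mul_div] using (integrable_tiltMoment_integrand hp hq hp0 hq0 hdom
      (k := 1) (by norm_num) (Ioo_subset_Icc_self ha)).div_const Z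
  calc DtiltP μ p q a
      = ∫ x, -(1 - a) * (qdens μ p q a x * log (p x / q x))
          - log Z * (p x ^ a * q x ^ (1 - a) / Z) ∂μ := by
        refine integral_congr_ae (Eventually.of_forall fun x => ?_)
        simp only [qdens]
        rw [rpow_mul_rpow_one_sub_div_mul_log_div (hp0 x) (hq0 x) ha]
        ring
    _ = -(1 - a) * tiltMean μ p q a - log Z * (Z / Z) := by
        rw [integral_sub (hwL.const_mul _) (hw.const_mul _), integral_const_mul,
          integral_const_mul, integral_div]
        rfl
    _ = -(1 - a) * tiltMean μ p q a - log Z := by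
        -- also at `Z = 0`, where `Z / Z = 0` and `log 0 = 0`
        rcases eq_or_ne Z 0 with hZ | hZ <;> simp [hZ]

theorem tiltM3_eq {a : ℝ} (ha : a ∈ Icc (0 : ℝ) 1) (hZ : Zfun μ p q a ≠ 0) :
    tiltM3 μ p q a = tiltMoment μ p q 3 a / Zfun μ p q a
      - 3 * (tiltMoment μ p q 2 a / Zfun μ p q a) * tiltMean μ p q a
      + 2 * tiltMean μ p q a ^ 3 := by
  set m := tiltMean μ p q a with hm
  have hI := fun k (hk : k ≤ 3) => integrable_tiltMoment_integrand hp hq hp0 hq0 hdom hk ha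
  have hM1 : tiltMoment μ p q 1 a = m * Zfun μ p q a := by
    rw [hm, tiltMean_eq_div, div_mul_cancel₀ _ hZ]
  calc tiltM3 μ p q a
      = (∫ x, p x ^ a * q x ^ (1 - a) * log (p x / q x) ^ 3
          - 3 * m * (p x ^ a * q x ^ (1 - a) * log (p x / q x) ^ 2)
          + 3 * m ^ 2 * (p x ^ a * q x ^ (1 - a) * log (p x / q x) ^ 1)
          - m ^ 3 * (p x ^ a * q x ^ (1 - a) * log (p x / q x) ^ 0) ∂μ) / Zfun μ p q a := by
        rw [← integral_div]
        refine integral_congr_ae (Eventually.of_forall fun x => ?_)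
        simp only [qdens]
        ring
    _ = (tiltMoment μ p q 3 a - 3 * m * tiltMoment μ p q 2 a + 3 * m ^ 2 * tiltMoment μ p q 1 a
          - m ^ 3 * tiltMoment μ p q 0 a) / Zfun μ p q a := by
        have h3 := hI 3 le_rfl
        have h2 := (hI 2 (by norm_num)).const_mul (3 * m)
        have h1 := (hI 1 (by norm_num)).const_mul (3 * m ^ 2)
        have h0 := (hI 0 (by norm_num)).const_mul (m ^ 3)
        rw [integral_sub ?_ h0, integral_add ?_ h1, integral_sub h3 h2,
          integral_const_mul, integral_const_mul, integral_const_mul]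
        · rfl
        · exact h3.sub h2
        · exact (h3.sub h2).add h1
    _ = _ := by
        rw [tiltMoment_zero, hM1]
        field_simp
        ring

theorem hasDerivAt_Zfun {a : ℝ} (ha : a ∈ Ioo (0 : ℝ) 1) :
    HasDerivAt (Zfun μ p q) (tiltMoment μ p q 1 a) a := by
  rw [← tiltMoment_zero]
  exact hasDerivAt_tiltMoment hp hq hp0 hq0 hdom (Nat.zero_le 2) ha

theorem hasDerivAt_tiltMean {a : ℝ} (ha : a ∈ Ioo (0 : ℝ) 1) (hZ : Zfun μ p q a ≠ 0) :
    HasDerivAt (tiltMean μ p q) (tiltVar μ p q a) a := by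
  rw [tiltMean_eq_div]
  refine ((hasDerivAt_tiltMoment hp hq hp0 hq0 hdom (k := 1) (by norm_num) ha).div
    (hasDerivAt_Zfun hp hq hp0 hq0 hdom ha) hZ).congr_deriv ?_
  rw [tiltVar_eq_div, tiltMean_eq_div]
  field_simp

theorem hasDerivAt_tiltVar {a : ℝ} (ha : a ∈ Ioo (0 : ℝ) 1) (hZ : Zfun μ p q a ≠ 0) :
    HasDerivAt (tiltVar μ p q) (tiltM3 μ p q a) a := by
  rw [tiltVar_eq_div]
  refine (((hasDerivAt_tiltMoment hp hq hp0 hq0 hdom (k := 2) le_rfl ha).div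
    (hasDerivAt_Zfun hp hq hp0 hq0 hdom ha) hZ).sub
    ((hasDerivAt_tiltMean hp hq hp0 hq0 hdom ha hZ).pow 2)).congr_deriv ?_
  rw [tiltM3_eq hp hq hp0 hq0 hdom (Ioo_subset_Icc_self ha) hZ, tiltVar_eq_div, tiltMean_eq_div]
  simp only [Nat.cast_ofNat, Nat.add_one_sub_one, pow_one]
  field_simp
  ring

theorem hasDerivAt_DtiltP {a : ℝ} (ha : a ∈ Ioo (0 : ℝ) 1) (hZ : Zfun μ p q a ≠ 0) :
    HasDerivAt (DtiltP μ p q) (-(1 - a) * tiltVar μ p q a) a := by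
  have hD : (fun t => -(1 - t) * tiltMean μ p q t - log (Zfun μ p q t)) =ᶠ[𝓝 a] DtiltP μ p q :=
    eventually_of_mem (Ioo_mem_nhds ha.1 ha.2) fun t ht => (DtiltP_eq hp hq hp0 hq0 hdom ht).symm
  refine (((((hasDerivAt_id a).const_sub 1).neg.mul
    (hasDerivAt_tiltMean hp hq hp0 hq0 hdom ha hZ)).sub
    ((hasDerivAt_Zfun hp hq hp0 hq0 hdom ha).log hZ)).congr_of_eventuallyEq hD.symm).congr_deriv ?_
  rw [tiltMean_eq_div]
  simp only [Pi.neg_apply, id_eq]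
  field_simp
  ring

end TiltedFamily

theorem tilted_taylor_upper_bound_general {A : Type*} [MeasurableSpace A]
    (μ : Measure A)
    (p q : A → ℝ) (hp : Measurable p) (hq : Measurable q)
    (hp0 : ∀ x, 0 ≤ p x) (hq0 : ∀ x, 0 ≤ q x)
    (hpint : ∫ x, p x ∂μ = 1) (hqint : ∫ x, q x ∂μ = 1)
    (hP3 : Integrable (fun x => p x * |Real.log (p x / q x)|^3) μ)
    (hQ3 : Integrable (fun x => q x * |Real.log (p x / q x)|^3) μ)
    (αs : ℝ) (hαs : αs ∈ Set.Ioo (0:ℝ) 1)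
    (σs : ℝ) (hσs : σs^2 = tiltVar μ p q αs)
    (σ0sq ρ0 : ℝ) (hσ0pos : 0 < σ0sq)
    (hσ0 : IsGLB ((fun a => tiltVar μ p q a) '' Set.Ioo (0:ℝ) 1) σ0sq)
    (hρ0 : IsLUB ((fun a => tiltM3abs μ p q a) '' Set.Ioo (0:ℝ) 1) ρ0) :
    ∀ α ∈ Set.Ioo αs 1,
      DtiltP μ p q α ≤ DtiltP μ p q αs - (α-αs)*(1-αs)*σs^2
        + (1/2)*(α-αs)^2*(σs^2 + 2*ρ0) := by
  intro α hα
  have hdom := integrable_envelope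
    (Integrable.of_integral_ne_zero (hpint ▸ one_ne_zero))
    (Integrable.of_integral_ne_zero (hqint ▸ one_ne_zero)) hP3 hQ3
  have hI : Icc αs α ⊆ Ioo 0 1 := Icc_subset_Ioo hαs.1 hα.2
  have hZ : ∀ a ∈ Ioo (0 : ℝ) 1, Zfun μ p q a ≠ 0 := fun a ha h =>
    hσ0pos.not_ge ((hσ0.1 ⟨a, ha, rfl⟩).trans_eq (tiltVar_eq_zero_of_Zfun_eq_zero h))
  have hV' : ∀ a ∈ Ioo (0 : ℝ) 1, HasDerivAt (tiltVar μ p q) (tiltM3 μ p q a) a := fun a ha =>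
    hasDerivAt_tiltVar hp hq hp0 hq0 hdom ha (hZ a ha)
  have hT : ∀ a ∈ Ioo (0 : ℝ) 1, |tiltM3 μ p q a| ≤ ρ0 := fun a ha =>
    (abs_tiltM3_le_tiltM3abs hp0 hq0 a).trans (hρ0.1 ⟨a, ha, rfl⟩)
  have hV : ∀ a ∈ Icc αs α, tiltVar μ p q a ≤ σs ^ 2 + ρ0 * (a - αs) := fun a ha => by
    have hIa : Icc αs a ⊆ Ioo 0 1 := (Icc_subset_Icc_right ha.2).trans hI
    linarith [sub_le_mul_sub_of_hasDerivAt_le ha.1 (fun t ht => hV' t (hIa ht))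
      (fun t ht => (le_abs_self _).trans (hT t (hIa ht)))]
  have hF'' : ∀ a ∈ Icc αs α, tiltVar μ p q a - (1 - a) * tiltM3 μ p q a ≤ σs ^ 2 + 2 * ρ0 := by
    intro a ha
    have hTa := abs_le.1 (hT a (hI ha))
    nlinarith [hV a ha, ha.1, ha.2, hα.2, hαs.1, (abs_nonneg _).trans (hT αs hαs)]
  have key := image_le_taylor_of_hasDerivAt_le hα.1.le
    (fun a ha => hasDerivAt_DtiltP hp hq hp0 hq0 hdom (hI ha) (hZ a (hI ha)))
    (fun a ha => ((((hasDerivAt_id a).const_sub 1).neg.mul (hV' a (hI ha))).congr_deriv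
      (by simp only [Pi.neg_apply, id_eq]; ring))) hF''
  rw [← hσs] at key
  linarith

theorem tilted_taylor_upper_bound {A : Type*} [MeasurableSpace A]
    (μ : Measure A) [SigmaFinite μ]
    (p q : A → ℝ) (hp : Measurable p) (hq : Measurable q)
    (hp0 : ∀ x, 0 ≤ p x) (hq0 : ∀ x, 0 ≤ q x)
    (hpint : ∫ x, p x ∂μ = 1) (hqint : ∫ x, q x ∂μ = 1)
    (hP3 : Integrable (fun x => p x * |Real.log (p x / q x)|^3) μ)
    (hQ3 : Integrable (fun x => q x * |Real.log (p x / q x)|^3) μ)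
    (δ : ℝ) (hδ0 : 0 < δ) (hδ : δ < ∫ x, q x * Real.log (q x / p x) ∂μ)
    (αs : ℝ) (hαs : αs ∈ Set.Ioo (0:ℝ) 1) (hαδ : DtiltP μ p q αs = δ)
    (σs : ℝ) (hσs : σs^2 = tiltVar μ p q αs)
    (σ0sq ρ0 : ℝ) (hσ0pos : 0 < σ0sq)
    (hσ0 : IsGLB ((fun a => tiltVar μ p q a) '' Set.Ioo (0:ℝ) 1) σ0sq)
    (hρ0 : IsLUB ((fun a => tiltM3abs μ p q a) '' Set.Ioo (0:ℝ) 1) ρ0) :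
    ∀ α ∈ Set.Ioo αs 1,
      DtiltP μ p q α ≤ DtiltP μ p q αs - (α-αs)*(1-αs)*σs^2
        + (1/2)*(α-αs)^2*(σs^2 + 2*ρ0) :=
  tilted_taylor_upper_bound_general μ p q hp hq hp0 hq0 hpint hqint hP3 hQ3 αs hαs σs hσs σ0sq ρ0
    hσ0pos hσ0 hρ0
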